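/- arXiv:2012.02159 — 2 statements merged into one kernel-verified Lean document; each statement's English description precedes it below -/
import Mathlib

section
/- Let t ≥ 4 and let H be a planar graph on t vertices containing ⌊t/4⌋ vertex-disjoint copies of K_4. Then for every n, the complete bipartite graph with parts of sizes 3⌊t/4⌋ − 1 and n does not contain H as a minor. -/
/-- `H` is a minor of `G`: there are nonempty, pairwise disjoint, connected
branch sets in `G`, one for each vertex of `H`, with an edge of `G` between the
branch sets of any two adjacent vertices of `H`. -/
def SimpleGraph.HasMinor {V W : Type*} (G : SimpleGraph V) (H : SimpleGraph W) : Prop :=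
  ∃ B : W → Set V,
    (∀ w, (B w).Nonempty) ∧
    (Pairwise fun w w' => Disjoint (B w) (B w')) ∧
    (∀ w, (G.induce (B w)).Connected) ∧
    (∀ w w', H.Adj w w' → ∃ a ∈ B w, ∃ b ∈ B w', G.Adj a b)

/-- A graph is planar iff it has neither a `K₅` minor nor a `K_{3,3}` minor
(Wagner's characterisation). -/
def SimpleGraph.IsPlanar {V : Type*} (G : SimpleGraph V) : Prop :=
  ¬ G.HasMinor (⊤ : SimpleGraph (Fin 5)) ∧
    ¬ G.HasMinor (completeBipartiteGraph (Fin 3) (Fin 3))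

/-- If `H` is a planar graph on `t ≥ 4` vertices containing `⌊t/4⌋` vertex-disjoint
copies of `K₄`, then for every `n` the complete bipartite graph with parts of sizes
`3⌊t/4⌋ − 1` and `n` does not contain `H` as a minor. -/
theorem completeBipartite_not_hasMinor_planar_with_disjoint_K4s
    (t : ℕ) (ht : 4 ≤ t) (H : SimpleGraph (Fin t)) (hplanar : H.IsPlanar)
    (f : Fin (t / 4) → Fin 4 → Fin t)
    (hinj : Function.Injective (fun p : Fin (t / 4) × Fin 4 => f p.1 p.2))
    (hK4 : ∀ (i : Fin (t / 4)) (a b : Fin 4), a ≠ b → H.Adj (f i a) (f i b)) :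
    ∀ n : ℕ,
      ¬ (completeBipartiteGraph (Fin (3 * (t / 4) - 1)) (Fin n)).HasMinor H := by
  intro n hmin
  classical
  obtain ⟨B, hne, hdisj, hconn, hadj⟩ := hmin
  have hk1 : 1 ≤ t / 4 := (Nat.le_div_iff_mul_le (by norm_num)).2 (by omega)
  -- key injectivity on pairs
  have hfne : ∀ (i j : Fin (t / 4)) (a b : Fin 4), (i, a) ≠ (j, b) → f i a ≠ f j b := by
    intro i j a b hpair h
    exact hpair (hinj (show (fun p : Fin (t/4) × Fin 4 => f p.1 p.2) (i,a) = (fun p : Fin (t/4) × Fin 4 => f p.1 p.2) (j,b) from h))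
  -- left traces of the K4 branch sets
  let T : Fin (t / 4) → Finset (Fin (3 * (t / 4) - 1)) := fun i =>
    Finset.univ.filter fun x => ∃ a : Fin 4, Sum.inl x ∈ B (f i a)
  have hTdisj : ∀ i ∈ (Finset.univ : Finset (Fin (t / 4))), ∀ j ∈ Finset.univ, i ≠ j →
      Disjoint (T i) (T j) := by
    intro i _ j _ hij
    refine Finset.disjoint_left.2 ?_
    intro x hi hj
    simp only [T, Finset.mem_filter] at hi hj
    obtain ⟨a, ha⟩ := hi.2
    obtain ⟨b, hb⟩ := hj.2
    have hne' : f i a ≠ f j b := hfne i j a b (by simp [hij])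
    exact Set.disjoint_left.1 (hdisj hne') ha hb
  have hT3 : ∀ i, 3 ≤ (T i).card := by
    intro i
    set A : Finset (Fin 4) := Finset.univ.filter
      (fun a => ∃ x, Sum.inl x ∈ B (f i a)) with hA
    have hAc : Aᶜ.card ≤ 1 := by
      refine Finset.card_le_one.2 ?_
      intro a ha b hb
      by_contra hab
      simp only [A, Finset.mem_compl, Finset.mem_filter, Finset.mem_univ,
        true_and, not_exists] at ha hb
      obtain ⟨u, hu, v, hv, huv⟩ := hadj _ _ (hK4 i a b hab)
      cases u with
      | inl x => exact ha x hu
      | inr x =>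
        cases v with
        | inl y => exact hb y hv
        | inr y => simp at huv
    have hA3 : 3 ≤ A.card := by
      have := Finset.card_compl_add_card A
      simp only [Fintype.card_fin] at this
      omega
    -- choose a left vertex for each a in A
    have hchoice : ∀ a ∈ A, ∃ x, Sum.inl x ∈ B (f i a) := by
      intro a ha
      simpa [A] using (Finset.mem_filter.1 ha).2
    choose g hg using hchoice
    have hmaps : ∀ a (ha : a ∈ A), g a ha ∈ T i := by
      intro a ha
      simp only [T, Finset.mem_filter, Finset.mem_univ, true_and]
      exact ⟨a, hg a ha⟩
    have hginj : ∀ a (ha : a ∈ A) b (hb : b ∈ A), g a ha = g b hb → a = b := by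
      intro a ha b hb hgab
      by_contra hab
      have hne' : f i a ≠ f i b := hfne i i a b (by simp [hab])
      exact Set.disjoint_left.1 (hdisj hne') (hg a ha) (hgab ▸ hg b hb)
    calc 3 ≤ A.card := hA3
    _ = A.attach.card := Finset.card_attach.symm
    _ ≤ (T i).card := Finset.card_le_card_of_injOn (fun a : {x // x ∈ A} => g a.1 a.2)
        (by rintro ⟨a, ha⟩ _; exact hmaps a ha)
        (by rintro ⟨a, ha⟩ _ ⟨b, hb⟩ _ h; exact Subtype.ext (hginj a ha b hb h))
  have hbig : 3 * (t / 4) ≤ (Finset.univ.biUnion T).card := by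
    calc 3 * (t / 4) = ∑ _i : Fin (t / 4), 3 := by simp [mul_comm]
    _ ≤ ∑ i : Fin (t / 4), (T i).card := Finset.sum_le_sum fun i _ => hT3 i
    _ = (Finset.univ.biUnion T).card := (Finset.card_biUnion hTdisj).symm
  have hsmall : (Finset.univ.biUnion T).card ≤ 3 * (t / 4) - 1 := by
    have := Finset.card_le_univ (Finset.univ.biUnion T)
    simpa using this
  omega
end

section
/- Let C > 30 and 0 < ε₁ ≤ 1/(10C), let t > 0, and define ρ(x) = 0 for x < t/5 and ρ(x) = ε₁/(log(15x/t))² for x ≥ t/5, and γ(x) = C·∫_x^∞ ρ(u)/u du. Then γ(t/5) = C·ε₁/log 3 < 1, and for every C' > 1 and x ≥ t/2 one has γ(x) − γ(C'x) ≥ (C·log C'/C')·ρ(x). -/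
/-!
On `[t/5, ∞)` the integrand `ρ u / u` is the derivative of `-ε₁ / log (15u/t)`, which tends to `0`,
so `γ x = C ε₁ / log (15x/t)` there. The first two claims follow from `log 3 > 1` and `C ε₁ ≤ 1/10`;
for the third, with `L = log (15x/t) ≥ 1` and `log (15C'x/t) = L + log C'`, it reduces to
`log C' ≤ C' - 1 ≤ (C' - 1) L`.
-/

open MeasureTheory Real Set Filter

lemma one_lt_log_of_three_le {y : ℝ} (hy : 3 ≤ y) : 1 < log y := by
  rw [lt_log_iff_exp_lt (by linarith)]
  linarith [exp_one_lt_d9]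

lemma hasDerivAt_neg_inv_log_mul {c u : ℝ} (hc : c ≠ 0) (hu : u ≠ 0) (hlog : log (c * u) ≠ 0) :
    HasDerivAt (fun v => -(log (c * v))⁻¹) (u⁻¹ / log (c * u) ^ 2) u := by
  have hlog' : HasDerivAt (fun v => log (c * v)) u⁻¹ u :=
    ((hasDerivAt_id u).const_mul c).log (mul_ne_zero hc hu) |>.congr_deriv (by simp [field])
  exact (hlog'.inv hlog).neg.congr_deriv (by ring)

lemma integral_Ioi_inv_div_log_mul_sq {c a : ℝ} (hc : 0 < c) (ha : 1 < c * a) :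
    ∫ u in Ioi a, u⁻¹ / log (c * u) ^ 2 = (log (c * a))⁻¹ := by
  have ha0 : 0 < a := pos_of_mul_pos_right (by linarith) hc.le
  have hlog_pos : ∀ u, a ≤ u → 0 < log (c * u) := fun u hu =>
    log_pos (ha.trans_le (by gcongr))
  have hderiv : ∀ u ∈ Ici a, HasDerivAt (fun v => -(log (c * v))⁻¹) (u⁻¹ / log (c * u) ^ 2) u :=
    fun u hu => hasDerivAt_neg_inv_log_mul hc.ne' (ha0.trans_le hu).ne' (hlog_pos u hu).ne'
  have hnonneg : ∀ u ∈ Ioi a, 0 ≤ u⁻¹ / log (c * u) ^ 2 := fun u hu => by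
    have := ha0.trans hu.out
    positivity
  have hlim : Tendsto (fun v => -(log (c * v))⁻¹) atTop (nhds 0) := by
    have := (tendsto_log_atTop.comp (tendsto_id.const_mul_atTop hc)).inv_tendsto_atTop.neg
    simpa using this
  rw [integral_Ioi_of_hasDerivAt_of_nonneg' hderiv hnonneg hlim]
  ring

lemma integral_Ioi_ite_div_log_mul_sq_div {c s a : ℝ} (ε : ℝ) (hc : 0 < c) (hs : 1 < c * s)
    (ha : s ≤ a) :
    ∫ u in Ioi a, (if u < s then 0 else ε / log (c * u) ^ 2) / u = ε / log (c * a) := by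
  have hρ : ∫ u in Ioi a, (if u < s then 0 else ε / log (c * u) ^ 2) / u =
      ε * ∫ u in Ioi a, u⁻¹ / log (c * u) ^ 2 := by
    rw [← integral_const_mul]
    refine setIntegral_congr_fun measurableSet_Ioi fun u hu => ?_
    rw [if_neg (not_lt.2 (ha.trans hu.out.le))]
    ring
  rw [hρ, integral_Ioi_inv_div_log_mul_sq hc (hs.trans_le (by gcongr)), div_eq_mul_inv]

lemma log_div_mul_sq_le_inv_sub_inv {L b : ℝ} (hL : 1 ≤ L) (hb : 1 < b) :
    log b / (b * L ^ 2) ≤ L⁻¹ - (L + log b)⁻¹ := by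
  have hD : 0 < log b := log_pos hb
  have hDb : log b ≤ b - 1 := log_le_sub_one_of_pos (by linarith)
  rw [inv_sub_inv (by positivity) (by positivity), add_sub_cancel_left,
    div_le_div_iff_of_pos_left hD (by positivity) (by positivity)]
  have hL0 : 0 ≤ L := by linarith
  nlinarith [mul_le_mul_of_nonneg_left hDb hL0,
    mul_nonneg hL0 (mul_nonneg (sub_nonneg.2 hb.le) (sub_nonneg.2 hL))]

/-- With `ρ(x) = 0` for `x < t/5` and `ρ(x) = ε₁/(log(15x/t))²` otherwise, and
`γ(x) = C·∫ₓ^∞ ρ(u)/u du`: one has `γ(t/5) = C·ε₁/log 3 < 1`, and for every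
`C' > 1` and `x ≥ t/2`, `γ(x) − γ(C'x) ≥ (C·log C'/C')·ρ(x)`. -/
theorem gamma_properties (C ε₁ t : ℝ) (hC : 30 < C) (hε₁ : 0 < ε₁)
    (hε₁C : ε₁ ≤ 1 / (10 * C)) (ht : 0 < t) :
    let ρ : ℝ → ℝ := fun x => if x < t / 5 then 0 else ε₁ / (Real.log (15 * x / t)) ^ 2
    let γ : ℝ → ℝ := fun x => C * ∫ u in Set.Ioi x, ρ u / u
    γ (t / 5) = C * ε₁ / Real.log 3 ∧ γ (t / 5) < 1 ∧
      ∀ C' > (1 : ℝ), ∀ x ≥ t / 2,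
        γ x - γ (C' * x) ≥ (C * Real.log C' / C') * ρ x := by
  intro ρ γ
  have hγ : ∀ a ≥ t / 5, γ a = C * ε₁ / log (15 * a / t) := by
    intro a ha
    have h3 : 1 < 15 / t * (t / 5) := by field_simp; norm_num
    simp only [γ, ρ, mul_div_right_comm (15 : ℝ)]
    rw [integral_Ioi_ite_div_log_mul_sq_div ε₁ (by positivity) h3 ha, mul_div_assoc]
  have hγ₀ : γ (t / 5) = C * ε₁ / log 3 := by
    rw [hγ _ le_rfl]
    field_simp
    norm_num
  refine ⟨hγ₀, ?_, fun C' hC' x hx => ?_⟩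
  · have hCε : C * ε₁ ≤ 1 / 10 := by
      rw [le_div_iff₀ (by linarith)] at hε₁C
      linarith
    rw [hγ₀, div_lt_one (by linarith [one_lt_log_of_three_le le_rfl])]
    linarith [one_lt_log_of_three_le le_rfl]
  · have hx₀ : 0 < x := by linarith
    have hL : 1 ≤ log (15 * x / t) :=
      (one_lt_log_of_three_le (by rw [le_div_iff₀ ht]; linarith)).le
    have hlog_mul : log (15 * (C' * x) / t) = log (15 * x / t) + log C' := by
      rw [mul_left_comm, mul_div_assoc, log_mul (by linarith) (by positivity), add_comm]
    have hρx : ρ x = ε₁ / log (15 * x / t) ^ 2 := if_neg (by linarith)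
    calc C * log C' / C' * ρ x
        = C * ε₁ * (log C' / (C' * log (15 * x / t) ^ 2)) := by rw [hρx]; ring
      _ ≤ C * ε₁ * ((log (15 * x / t))⁻¹ - (log (15 * x / t) + log C')⁻¹) := by
          gcongr
          exact log_div_mul_sq_le_inv_sub_inv hL hC'
      _ = γ x - γ (C' * x) := by
          rw [hγ x (by linarith), hγ (C' * x) (by nlinarith), hlog_mul]
          ring
end
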